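/- arXiv:quant-ph/0701103 — 3 statements merged into one kernel-verified Lean document; each statement's English description precedes it below -/
import Mathlib

section
/- Let n ≥ 3 be odd, ω_{2n} = e^{2πi/(2n)}, and let G' ⊆ U(2) be the matrix group generated by C = diag(ω_{2n}, ω_{2n}^{-1}) and B = [[0,1],[1,0]] (so G' is isomorphic to the dihedral group of order 4n). Then every N ∈ U(4) satisfying N (G'⊗G') N† = G'⊗G' is a generalised permutation matrix, i.e. N has exactly one non-zero entry in each row and each column. -/
open Matrix Kronecker

/-- The tensor (Kronecker) square of a set of matrices. -/
def tensorSet (S : Set (Matrix (Fin 2) (Fin 2) ℂ)) :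
    Set (Matrix (Fin 2 × Fin 2) (Fin 2 × Fin 2) ℂ) :=
  {x | ∃ a ∈ S, ∃ b ∈ S, x = a ⊗ₖ b}

noncomputable def dfun (u v : ℂ) : Fin 2 × Fin 2 → ℂ := fun p =>
  if p.1 = 0 then (if p.2 = 0 then u else v) else (if p.2 = 0 then v⁻¹ else u⁻¹)

lemma kron_diag (x y : ℂ) :
    (!![x, 0; 0, x⁻¹] : Matrix (Fin 2) (Fin 2) ℂ) ⊗ₖ !![y, 0; 0, y⁻¹]
      = Matrix.diagonal (dfun (x*y) (x*y⁻¹)) := by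
  ext ⟨i,j⟩ ⟨k,l⟩
  fin_cases i <;> fin_cases j <;> fin_cases k <;> fin_cases l <;>
    simp [Matrix.kroneckerMap_apply, dfun, Matrix.diagonal_apply, _root_.mul_inv_rev,
      inv_inv, Prod.ext_iff, mul_comm]

lemma pow_C {ω : ℂ} {C : Matrix (Fin 2) (Fin 2) ℂ} (hC : C = !![ω, 0; 0, ω⁻¹]) (k : ℕ) :
    C ^ k = !![ω ^ k, 0; 0, (ω ^ k)⁻¹] := by
  induction k with
  | zero => ext i j; fin_cases i <;> fin_cases j <;> simp
  | succ k ih =>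
      rw [pow_succ, ih, hC]
      ext i j
      fin_cases i <;> fin_cases j <;>
        simp [Matrix.mul_apply, Fin.sum_univ_succ, pow_succ, _root_.mul_inv, mul_comm]

lemma mem_form {n : ℕ} {ω : ℂ} {C B : Matrix (Fin 2) (Fin 2) ℂ}
    (hC : C = !![ω, 0; 0, ω⁻¹]) (hB : B = !![0, 1; 1, 0])
    (hω2n : ω ^ (2*n) = 1) (hn : 1 ≤ n) :
    ∀ g ∈ Submonoid.closure {C, B}, ∃ k : ℕ, g = C ^ k ∨ g = C ^ k * B := by
  have hBB : B * B = 1 := by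
    rw [hB]; ext i j
    fin_cases i <;> fin_cases j <;> simp [Matrix.mul_apply, Fin.sum_univ_succ]
  have hpow1 : ω ^ (2*n-1) = ω⁻¹ := by
    have h : ω * ω ^ (2*n-1) = 1 := by
      rw [← pow_succ']
      have : 2*n-1+1 = 2*n := by omega
      rw [this, hω2n]
    exact (inv_eq_of_mul_eq_one_right h).symm
  have hBC : B * C = C ^ (2*n-1) * B := by
    rw [pow_C hC, hpow1, inv_inv, hC, hB]
    ext i j
    fin_cases i <;> fin_cases j <;> simp [Matrix.mul_apply, Fin.sum_univ_succ]
  have hBCk : ∀ k, B * C ^ k = C ^ (k*(2*n-1)) * B := by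
    intro k
    induction k with
    | zero => simp
    | succ k ih =>
        rw [pow_succ, ← mul_assoc, ih, mul_assoc, hBC, ← mul_assoc, ← pow_add]
        congr 2
        ring
  intro g hg
  induction hg using Submonoid.closure_induction with
  | mem x hx =>
      rcases hx with h | h
      · exact ⟨1, Or.inl (by rw [h, pow_one])⟩
      · exact ⟨0, Or.inr (by rw [h, pow_zero, one_mul])⟩
  | one => exact ⟨0, Or.inl (pow_zero C).symm⟩
  | mul x y hx hy ihx ihy =>
      obtain ⟨j, hj⟩ := ihx
      obtain ⟨k, hk⟩ := ihy
      rcases hj with hj | hj <;> rcases hk with hk | hk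
      · exact ⟨j + k, Or.inl (by rw [hj, hk, pow_add])⟩
      · exact ⟨j + k, Or.inr (by rw [hj, hk, ← mul_assoc, pow_add])⟩
      · refine ⟨j + k*(2*n-1), Or.inr ?_⟩
        rw [hj, hk, mul_assoc, hBCk, ← mul_assoc, pow_add]
      · refine ⟨j + k*(2*n-1), Or.inl ?_⟩
        rw [hj, hk]
        calc C^j * B * (C^k * B) = C^j * (B * C^k) * B := by
              simp only [mul_assoc]
          _ = C^j * (C^(k*(2*n-1)) * B) * B := by rw [hBCk]
          _ = C^(j + k*(2*n-1)) * (B * B) := by rw [pow_add]; simp only [mul_assoc]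
          _ = _ := by rw [hBB, mul_one]

lemma tensor_form {n : ℕ} {ω : ℂ} {C B : Matrix (Fin 2) (Fin 2) ℂ}
    {G' : Set (Matrix (Fin 2) (Fin 2) ℂ)}
    (hC : C = !![ω, 0; 0, ω⁻¹]) (hB : B = !![0, 1; 1, 0])
    (hω0 : ω ≠ 0) (hω2n : ω ^ (2*n) = 1) (hn : 1 ≤ n)
    (hG' : G' = (Submonoid.closure {C, B} : Submonoid (Matrix (Fin 2) (Fin 2) ℂ))) :
    ∀ E ∈ tensorSet G', E.trace = (0:ℂ) ∨
      ∃ u v : ℂ, u ≠ 0 ∧ v ≠ 0 ∧ E = Matrix.diagonal (dfun u v) := by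
  rintro E ⟨a, ha, b, hb, rfl⟩
  rw [hG'] at ha hb
  obtain ⟨j, hj⟩ := mem_form hC hB hω2n hn a ha
  obtain ⟨k, hk⟩ := mem_form hC hB hω2n hn b hb
  have htrB : ∀ m : ℕ, (C ^ m * B).trace = 0 := by
    intro m
    rw [pow_C hC, hB]
    simp [Matrix.trace_fin_two, Matrix.mul_apply, Fin.sum_univ_succ]
  rcases hj with hj | hj
  · rcases hk with hk | hk
    · right
      refine ⟨ω^j * ω^k, ω^j * (ω^k)⁻¹,
        mul_ne_zero (pow_ne_zero _ hω0) (pow_ne_zero _ hω0),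
        mul_ne_zero (pow_ne_zero _ hω0) (inv_ne_zero (pow_ne_zero _ hω0)), ?_⟩
      rw [hj, hk, pow_C hC j, pow_C hC k, kron_diag]
    · left; rw [hk, Matrix.trace_kronecker, htrB, mul_zero]
  · left; rw [hj, Matrix.trace_kronecker, htrB, zero_mul]

lemma diag_trace3 (u v u' v' : ℂ) :
    (Matrix.diagonal (dfun u v) * (Matrix.diagonal (dfun u' v')
      * Matrix.diagonal (dfun u' v'))).trace
    = u*(u'*u') + v*(v'*v') + v⁻¹*(v'⁻¹*v'⁻¹) + u⁻¹*(u'⁻¹*u'⁻¹) := by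
  simp [Matrix.diagonal_mul_diagonal, Matrix.trace_diagonal, Fintype.sum_prod_type,
    Fin.sum_univ_succ, dfun]
  ring

lemma scalar_contra' (ω u₁ u₂ : ℂ) (h0 : ω ≠ 0) (h2 : ω^2 ≠ 1) (h4 : ω^2 ≠ -1)
    (hu₁ : u₁ = ω ∨ u₁ = ω⁻¹) (hu₂ : u₂ = ω ∨ u₂ = ω⁻¹)
    (heq : u₁*(u₂*u₂) + u₁*(u₂*u₂) + u₁⁻¹*(u₂⁻¹*u₂⁻¹) + u₁⁻¹*(u₂⁻¹*u₂⁻¹)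
      = ω*(ω*ω) + ω*(ω⁻¹*ω⁻¹) + ω⁻¹*(ω*ω) + ω⁻¹*(ω⁻¹*ω⁻¹)) : False := by
  have key : ω^4*((ω^2-1)^2*(ω^2+1)) = 0 := by
    rcases hu₁ with h | h <;> rcases hu₂ with h' | h' <;> rw [h, h'] at heq <;>
      field_simp at heq
    · linear_combination ω^4*heq
    · linear_combination (-ω^4)*heq
    · linear_combination (-ω^4)*heq
    · linear_combination ω^4*heq
  have key2 : (ω^2-1)^2*(ω^2+1) = 0 := by
    rcases mul_eq_zero.mp key with h | h
    · exact absurd h (pow_ne_zero _ h0)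
    · exact h
  rcases mul_eq_zero.mp key2 with h | h
  · exact h2 (by linear_combination (pow_eq_zero_iff (n:=2) (by norm_num)).mp h)
  · exact h4 (by linear_combination h)

/-- Let n ≥ 3 be odd, ω_{2n} = e^{2πi/(2n)}, and let G' ⊆ U(2) be the
matrix group generated by C = diag(ω_{2n}, ω_{2n}⁻¹) and B = [[0,1],[1,0]].  Then every
N ∈ U(4) satisfying N (G'⊗G') N† = G'⊗G' is a generalised permutation matrix, i.e. N
has exactly one non-zero entry in each row and each column. -/
theorem stmt_12 (n : ℕ) (hn : 3 ≤ n) (hodd : Odd n)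
    (ω : ℂ) (hω : ω = Complex.exp (2 * Real.pi * Complex.I / (2 * n)))
    (C B : Matrix (Fin 2) (Fin 2) ℂ)
    (hC : C = !![ω, 0; 0, ω⁻¹]) (hB : B = !![0, 1; 1, 0])
    (G' : Set (Matrix (Fin 2) (Fin 2) ℂ))
    (hG' : G' = (Submonoid.closure {C, B} : Submonoid (Matrix (Fin 2) (Fin 2) ℂ)))
    (N : Matrix (Fin 2 × Fin 2) (Fin 2 × Fin 2) ℂ)
    (hN : N ∈ Matrix.unitaryGroup (Fin 2 × Fin 2) ℂ)
    (hnorm : (fun g => N * g * Nᴴ) '' tensorSet G' = tensorSet G') :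
    (∀ p : Fin 2 × Fin 2, ∃! q : Fin 2 × Fin 2, N p q ≠ 0) ∧
    (∀ q : Fin 2 × Fin 2, ∃! p : Fin 2 × Fin 2, N p q ≠ 0) := by
  -- basic facts about ω
  have hn0 : ((n:ℂ)) ≠ 0 := by
    simp only [ne_eq, Nat.cast_eq_zero]; omega
  have hπI : (2 * (Real.pi:ℂ) * Complex.I) ≠ 0 := by
    simp [Real.pi_ne_zero, Complex.I_ne_zero]
  have hω0 : ω ≠ 0 := by rw [hω]; exact Complex.exp_ne_zero _
  have hω2n : ω ^ (2*n) = 1 := by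
    rw [hω, ← Complex.exp_nat_mul]
    rw [show ((2*n : ℕ) : ℂ) * (2 * Real.pi * Complex.I / (2 * n)) = 2 * Real.pi * Complex.I by
      push_cast; field_simp]
    exact Complex.exp_two_pi_mul_I
  have hpow : ∀ k : ℕ, 0 < k → k < 2*n → ω ^ k ≠ 1 := by
    intro k hk1 hk2 h
    rw [hω, ← Complex.exp_nat_mul, Complex.exp_eq_one_iff] at h
    obtain ⟨m, hm⟩ := h
    have hm2 : (k : ℂ) = m * (2*n) := by
      field_simp at hm
      exact mul_right_cancel₀ hπI (by linear_combination (2 * (Real.pi:ℂ) * Complex.I) * hm)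
    have hm3 : (k : ℤ) = m * (2*n) := by exact_mod_cast hm2
    rcases le_or_gt m 0 with h' | h'
    · have : (m : ℤ) * (2*n) ≤ 0 := mul_nonpos_of_nonpos_of_nonneg h' (by positivity)
      omega
    · have h1 : (1:ℤ) ≤ m := h'
      have : (2*n : ℤ) ≤ m * (2*n) := le_mul_of_one_le_left (by positivity) h1
      omega
  have hs1 : ω^2 ≠ 1 := hpow 2 (by omega) (by omega)
  have hs4 : ω^4 ≠ 1 := hpow 4 (by omega) (by omega)
  have hs2 : ω^2 ≠ -1 := by
    intro h
    exact hs4 (by rw [show (4:ℕ) = 2*2 from rfl, pow_mul, h]; norm_num)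
  have hne : ω ≠ ω⁻¹ := by
    intro h
    apply hs1
    rw [pow_two]
    nth_rewrite 2 [h]
    exact mul_inv_cancel₀ hω0
  have hself : ∀ w : ℂ, (w = ω ∨ w = ω⁻¹) → w ≠ w⁻¹ := by
    rintro w (rfl | rfl)
    · exact hne
    · rw [inv_inv]; exact fun h => hne h.symm
  -- unitarity
  have hNN : N * Nᴴ = 1 := by
    have := Matrix.mem_unitaryGroup_iff.mp hN
    rwa [Matrix.star_eq_conjTranspose] at this
  have hNN' : Nᴴ * N = 1 := by
    have := Matrix.mem_unitaryGroup_iff'.mp hN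
    rwa [Matrix.star_eq_conjTranspose] at this
  have hrow : ∀ p, ∃ q, N p q ≠ 0 := by
    intro p
    by_contra h
    push_neg at h
    have h1 := congrFun (congrFun hNN p) p
    rw [Matrix.mul_apply] at h1
    simp [h, Matrix.one_apply] at h1
  have hcol : ∀ q, ∃ p, N p q ≠ 0 := by
    intro q
    by_contra h
    push_neg at h
    have h1 := congrFun (congrFun hNN' q) q
    rw [Matrix.mul_apply] at h1
    simp [h, Matrix.conjTranspose_apply, Matrix.one_apply] at h1
  have htrace : ∀ g : Matrix (Fin 2 × Fin 2) (Fin 2 × Fin 2) ℂ,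
      (N * g * Nᴴ).trace = g.trace := by
    intro g
    rw [Matrix.trace_mul_comm (N*g) Nᴴ, ← mul_assoc, hNN', one_mul]
  have hmc : ∀ g h : Matrix (Fin 2 × Fin 2) (Fin 2 × Fin 2) ℂ,
      (N*g*Nᴴ) * (N*h*Nᴴ) = N*(g*h)*Nᴴ := by
    intro g h
    calc (N*g*Nᴴ) * (N*h*Nᴴ) = N*(g*((Nᴴ*N)*(h*Nᴴ))) := by simp only [mul_assoc]
      _ = N*(g*(h*Nᴴ)) := by rw [hNN', one_mul]
      _ = N*(g*h)*Nᴴ := by simp only [mul_assoc]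
  have hconj_mem : ∀ g ∈ tensorSet G', N * g * Nᴴ ∈ tensorSet G' := by
    intro g hg
    rw [← hnorm]
    exact ⟨g, hg, rfl⟩
  -- membership of the two basic diagonal elements
  have hCG : C ∈ G' := by
    rw [hG']
    exact Submonoid.subset_closure (Set.mem_insert _ _)
  have h1G : (1 : Matrix (Fin 2) (Fin 2) ℂ) ∈ G' := by
    rw [hG']
    exact (Submonoid.closure {C, B}).one_mem
  have hone : (1 : Matrix (Fin 2) (Fin 2) ℂ) = !![(1:ℂ),0;0,(1:ℂ)⁻¹] := by
    ext i j
    fin_cases i <;> fin_cases j <;> simp [Matrix.one_apply]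
  have hD1 : C ⊗ₖ (1 : Matrix (Fin 2) (Fin 2) ℂ) = Matrix.diagonal (dfun ω ω) := by
    rw [hC, hone, kron_diag]
    norm_num
  have hD2 : (1 : Matrix (Fin 2) (Fin 2) ℂ) ⊗ₖ C = Matrix.diagonal (dfun ω ω⁻¹) := by
    rw [hC, hone, kron_diag]
    norm_num
  have hA1 : C ⊗ₖ (1 : Matrix (Fin 2) (Fin 2) ℂ) ∈ tensorSet G' := ⟨C, hCG, 1, h1G, rfl⟩
  have hA2 : (1 : Matrix (Fin 2) (Fin 2) ℂ) ⊗ₖ C ∈ tensorSet G' := ⟨1, h1G, C, hCG, rfl⟩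
  -- the conjugates are diagonal
  have htr0 : ω + ω + ω⁻¹ + ω⁻¹ ≠ 0 := by
    intro h
    apply hs2
    field_simp at h
    linear_combination h/2
  have hdiagtrace : ∀ u v : ℂ, (Matrix.diagonal (dfun u v)).trace = u + v + v⁻¹ + u⁻¹ := by
    intro u v
    rw [Matrix.trace_diagonal, Fintype.sum_prod_type]
    simp [dfun, Fin.sum_univ_succ]
    ring
  have hE1 : ∃ u v : ℂ, u ≠ 0 ∧ v ≠ 0 ∧
      N * (C ⊗ₖ (1 : Matrix (Fin 2) (Fin 2) ℂ)) * Nᴴ = Matrix.diagonal (dfun u v) := by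
    rcases tensor_form hC hB hω0 hω2n (by omega) hG' _ (hconj_mem _ hA1) with h | h
    · exfalso
      rw [htrace, hD1, hdiagtrace] at h
      exact htr0 h
    · exact h
  have hE2 : ∃ u v : ℂ, u ≠ 0 ∧ v ≠ 0 ∧
      N * ((1 : Matrix (Fin 2) (Fin 2) ℂ) ⊗ₖ C) * Nᴴ = Matrix.diagonal (dfun u v) := by
    rcases tensor_form hC hB hω0 hω2n (by omega) hG' _ (hconj_mem _ hA2) with h | h
    · exfalso
      rw [htrace, hD2, hdiagtrace, inv_inv] at h
      exact htr0 (by linear_combination h)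
    · exact h
  obtain ⟨u₁, v₁, hu₁0, hv₁0, hE1d⟩ := hE1
  obtain ⟨u₂, v₂, hu₂0, hv₂0, hE2d⟩ := hE2
  -- intertwining relations
  have hrel : ∀ (X : Matrix (Fin 2 × Fin 2) (Fin 2 × Fin 2) ℂ) (d : Fin 2 × Fin 2 → ℂ),
      N * X * Nᴴ = Matrix.diagonal d → Matrix.diagonal d * N = N * X := by
    intro X d h
    rw [← h]
    calc N * X * Nᴴ * N = N * X * (Nᴴ * N) := by simp only [mul_assoc]
      _ = N * X := by rw [hNN', mul_one]
  have hrel1 : Matrix.diagonal (dfun u₁ v₁) * N = N * Matrix.diagonal (dfun ω ω) := by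
    rw [← hD1]; exact hrel _ _ hE1d
  have hrel2 : Matrix.diagonal (dfun u₂ v₂) * N = N * Matrix.diagonal (dfun ω ω⁻¹) := by
    rw [← hD2]; exact hrel _ _ hE2d
  have hentry : ∀ (d e : Fin 2 × Fin 2 → ℂ),
      Matrix.diagonal d * N = N * Matrix.diagonal e →
      ∀ p q, N p q ≠ 0 → d p = e q := by
    intro d e h p q hpq
    have h2 := congrFun (congrFun h p) q
    rw [Matrix.diagonal_mul, Matrix.mul_diagonal] at h2
    exact mul_right_cancel₀ hpq (h2.trans (mul_comm _ _))
  -- values of dfun ω ω and dfun ω ω⁻¹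
  have hval1 : ∀ q : Fin 2 × Fin 2, dfun ω ω q = ω ∨ dfun ω ω q = ω⁻¹ := by
    rintro ⟨a, b⟩
    fin_cases a <;> fin_cases b <;> simp [dfun]
  have hval2 : ∀ q : Fin 2 × Fin 2, dfun ω ω⁻¹ q = ω ∨ dfun ω ω⁻¹ q = ω⁻¹ := by
    rintro ⟨a, b⟩
    fin_cases a <;> fin_cases b <;> simp [dfun]
  -- each of u₁ v₁ u₂ v₂ is ω or ω⁻¹
  have hu₁ : u₁ = ω ∨ u₁ = ω⁻¹ := by
    obtain ⟨q, hq⟩ := hrow (0,0)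
    have h := hentry _ _ hrel1 (0,0) q hq
    rw [show dfun u₁ v₁ (0,0) = u₁ from by simp [dfun]] at h
    rw [h]; exact hval1 q
  have hv₁ : v₁ = ω ∨ v₁ = ω⁻¹ := by
    obtain ⟨q, hq⟩ := hrow (0,1)
    have h := hentry _ _ hrel1 (0,1) q hq
    rw [show dfun u₁ v₁ (0,1) = v₁ from by simp [dfun]] at h
    rw [h]; exact hval1 q
  have hu₂ : u₂ = ω ∨ u₂ = ω⁻¹ := by
    obtain ⟨q, hq⟩ := hrow (0,0)
    have h := hentry _ _ hrel2 (0,0) q hq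
    rw [show dfun u₂ v₂ (0,0) = u₂ from by simp [dfun]] at h
    rw [h]; exact hval2 q
  have hv₂ : v₂ = ω ∨ v₂ = ω⁻¹ := by
    obtain ⟨q, hq⟩ := hrow (0,1)
    have h := hentry _ _ hrel2 (0,1) q hq
    rw [show dfun u₂ v₂ (0,1) = v₂ from by simp [dfun]] at h
    rw [h]; exact hval2 q
  -- the trace identity
  have hmain0 : (Matrix.diagonal (dfun u₁ v₁) * (Matrix.diagonal (dfun u₂ v₂)
      * Matrix.diagonal (dfun u₂ v₂))).trace
      = (Matrix.diagonal (dfun ω ω) * (Matrix.diagonal (dfun ω ω⁻¹)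
      * Matrix.diagonal (dfun ω ω⁻¹))).trace := by
    rw [← hE1d, ← hE2d, ← hD1, ← hD2, hmc, hmc, htrace]
  rw [diag_trace3, diag_trace3] at hmain0
  simp only [inv_inv] at hmain0
  -- exclusions
  have hL : ¬(u₁ = v₁ ∧ u₂ = v₂) := by
    rintro ⟨h1, h2⟩
    rw [← h1, ← h2] at hmain0
    exact scalar_contra' ω u₁ u₂ hω0 hs1 hs2 hu₁ hu₂ (by linear_combination hmain0)
  have hR : ¬(u₁ = v₁⁻¹ ∧ u₂ = v₂⁻¹) := by
    rintro ⟨h1, h2⟩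
    have hv1' : v₁ = u₁⁻¹ := by rw [h1, inv_inv]
    have hv2' : v₂ = u₂⁻¹ := by rw [h2, inv_inv]
    rw [hv1', hv2'] at hmain0
    simp only [inv_inv] at hmain0
    exact scalar_contra' ω u₁ u₂ hω0 hs1 hs2 hu₁ hu₂ (by linear_combination hmain0)
  have hni1 : u₁ ≠ u₁⁻¹ := hself u₁ hu₁
  have hni2 : v₁ ≠ v₁⁻¹ := hself v₁ hv₁
  -- injectivity of p ↦ (dfun u₁ v₁ p, dfun u₂ v₂ p)
  have hginj : ∀ p p' : Fin 2 × Fin 2, dfun u₁ v₁ p = dfun u₁ v₁ p' →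
      dfun u₂ v₂ p = dfun u₂ v₂ p' → p = p' := by
    rintro ⟨a, b⟩ ⟨a', b'⟩ h1 h2
    fin_cases a <;> fin_cases b <;> fin_cases a' <;> fin_cases b' <;>
      simp only [dfun] at h1 h2 <;>
      norm_num at h1 h2 ⊢ <;>
      first
      | rfl
      | exact (hL ⟨h1, h2⟩).elim
      | exact (hL ⟨h1.symm, h2.symm⟩).elim
      | exact (hR ⟨h1, h2⟩).elim
      | exact (hR ⟨h1.symm, h2.symm⟩).elim
      | exact (hR ⟨(inv_inv u₁).symm.trans (congrArg Inv.inv h1.symm),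
          (inv_inv u₂).symm.trans (congrArg Inv.inv h2.symm)⟩).elim
      | exact (hR ⟨(inv_inv u₁).symm.trans (congrArg Inv.inv h1),
          (inv_inv u₂).symm.trans (congrArg Inv.inv h2)⟩).elim
      | exact (hL ⟨inv_injective h1, inv_injective h2⟩).elim
      | exact (hL ⟨inv_injective h1.symm, inv_injective h2.symm⟩).elim
      | exact (hni1 h1).elim
      | exact (hni1 h1.symm).elim
      | exact (hni2 h1).elim
      | exact (hni2 h1.symm).elim
  -- injectivity of q ↦ (dfun ω ω q, dfun ω ω⁻¹ q)
  have hqinj : ∀ q q' : Fin 2 × Fin 2, dfun ω ω q = dfun ω ω q' →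
      dfun ω ω⁻¹ q = dfun ω ω⁻¹ q' → q = q' := by
    rintro ⟨a, b⟩ ⟨a', b'⟩ h1 h2
    fin_cases a <;> fin_cases b <;> fin_cases a' <;> fin_cases b' <;>
      simp only [dfun, inv_inv] at h1 h2 <;>
      norm_num at h1 h2 ⊢ <;>
      first
      | rfl
      | exact (hne h1).elim
      | exact (hne h1.symm).elim
      | exact (hne h2).elim
      | exact (hne h2.symm).elim
  constructor
  · intro p
    obtain ⟨q, hq⟩ := hrow p
    refine ⟨q, hq, fun q' hq' => ?_⟩
    exact hqinj q' q
      ((hentry _ _ hrel1 p q' hq').symm.trans (hentry _ _ hrel1 p q hq))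
      ((hentry _ _ hrel2 p q' hq').symm.trans (hentry _ _ hrel2 p q hq))
  · intro q
    obtain ⟨p, hp⟩ := hcol q
    refine ⟨p, hp, fun p' hp' => ?_⟩
    exact hginj p' p
      ((hentry _ _ hrel1 p' q hp').trans (hentry _ _ hrel1 p q hp).symm)
      ((hentry _ _ hrel2 p' q hp').trans (hentry _ _ hrel2 p q hp).symm)
end

section
/- Let n ≥ 3 be odd, ω_{2n} = e^{2πi/(2n)}, and let G' ⊆ U(2) be the matrix group generated by C = diag(ω_{2n}, ω_{2n}^{-1}) and B = [[0,1],[1,0]]. Then no diagonal unitary D ∈ U(4) with D (G'⊗G') D† = G'⊗G' is entangling: every such D is of the form A⊗B' for some A, B' ∈ U(2). -/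
open Matrix Kronecker

/-- Let n ≥ 3 be odd, ω_{2n} = e^{2πi/(2n)}, and let G' ⊆ U(2) be the
matrix group generated by C = diag(ω_{2n}, ω_{2n}⁻¹) and B = [[0,1],[1,0]].  Then no
diagonal unitary D ∈ U(4) with D (G'⊗G') D† = G'⊗G' is entangling: every such D is of
the form A ⊗ B' for some A, B' ∈ U(2). -/
theorem stmt_14 (n : ℕ) (hn : 3 ≤ n) (hodd : Odd n)
    (ω : ℂ) (hω : ω = Complex.exp (2 * Real.pi * Complex.I / (2 * n)))
    (C B : Matrix (Fin 2) (Fin 2) ℂ)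
    (hC : C = !![ω, 0; 0, ω⁻¹]) (hB : B = !![0, 1; 1, 0])
    (G' : Set (Matrix (Fin 2) (Fin 2) ℂ))
    (hG' : G' = (Submonoid.closure {C, B} : Submonoid (Matrix (Fin 2) (Fin 2) ℂ)))
    (D : Matrix (Fin 2 × Fin 2) (Fin 2 × Fin 2) ℂ)
    (hD : D ∈ Matrix.unitaryGroup (Fin 2 × Fin 2) ℂ) (hdiag : D.IsDiag)
    (hnorm : (fun g => D * g * Dᴴ) '' tensorSet G' = tensorSet G') :
    ∃ A B' : Matrix (Fin 2) (Fin 2) ℂ,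
      A ∈ Matrix.unitaryGroup (Fin 2) ℂ ∧ B' ∈ Matrix.unitaryGroup (Fin 2) ℂ ∧
      D = A ⊗ₖ B' := by
  have hω0 : ω ≠ 0 := by rw [hω]; exact Complex.exp_ne_zero _
  -- classification of elements of G'
  have hclass : ∀ g ∈ Submonoid.closure ({C, B} : Set (Matrix (Fin 2) (Fin 2) ℂ)),
      (∃ p : ℂ, p ≠ 0 ∧ g = !![p, 0; 0, p⁻¹]) ∨
      (∃ r : ℂ, r ≠ 0 ∧ g = !![0, r; r⁻¹, 0]) := by
    intro g hg
    induction hg using Submonoid.closure_induction with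
    | mem x hx =>
      rcases hx with h | h
      · exact Or.inl ⟨ω, hω0, by rw [h, hC]⟩
      · refine Or.inr ⟨1, one_ne_zero, ?_⟩
        rw [h, hB]; norm_num
    | one =>
      exact Or.inl ⟨1, one_ne_zero, by rw [Matrix.one_fin_two]; norm_num⟩
    | mul x y hx hy ihx ihy =>
      rcases ihx with ⟨p, hp, rfl⟩ | ⟨p, hp, rfl⟩ <;>
        rcases ihy with ⟨q, hq, rfl⟩ | ⟨q, hq, rfl⟩
      · exact Or.inl ⟨p * q, mul_ne_zero hp hq, by
          rw [Matrix.mul_fin_two]; norm_num [mul_inv, mul_comm]⟩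
      · exact Or.inr ⟨p * q, mul_ne_zero hp hq, by
          rw [Matrix.mul_fin_two]; norm_num [mul_inv, mul_comm]⟩
      · exact Or.inr ⟨p * q⁻¹, mul_ne_zero hp (inv_ne_zero hq), by
          rw [Matrix.mul_fin_two]; norm_num [mul_inv, mul_comm]⟩
      · exact Or.inl ⟨p * q⁻¹, mul_ne_zero hp (inv_ne_zero hq), by
          rw [Matrix.mul_fin_two]; norm_num [mul_inv, mul_comm]⟩
  -- D is diagonal
  set f : Fin 2 × Fin 2 → ℂ := D.diag with hf
  have hDf : D = Matrix.diagonal f := (hdiag.diagonal_diag).symm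
  -- unitarity of entries
  have hunit : ∀ i, f i * star (f i) = 1 := by
    intro i
    have h1 : D * star D = 1 := (Matrix.mem_unitaryGroup_iff).mp hD
    have := congrFun (congrFun h1 i) i
    rw [hDf] at this
    simpa [Matrix.star_eq_conjTranspose, Matrix.diagonal_conjTranspose,
      Matrix.diagonal_mul_diagonal, Matrix.diagonal_apply_eq, Matrix.one_apply_eq] using this
  have hfne : ∀ i, f i ≠ 0 := by
    intro i h
    have := hunit i
    rw [h] at this
    simp at this
  -- C ⊗ B is in tensorSet G'
  have hCB : C ⊗ₖ B ∈ tensorSet G' := by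
    refine ⟨C, ?_, B, ?_, rfl⟩
    · rw [hG']; exact Submonoid.subset_closure (Set.mem_insert _ _)
    · rw [hG']; exact Submonoid.subset_closure (Set.mem_insert_of_mem _ rfl)
  have hmem : D * (C ⊗ₖ B) * Dᴴ ∈ tensorSet G' := by
    rw [← hnorm]; exact Set.mem_image_of_mem _ hCB
  obtain ⟨g₁, hg₁, g₂, hg₂, hEq⟩ := hmem
  rw [hG'] at hg₁ hg₂
  -- entry formula for conjugation
  have hentry : ∀ i j : Fin 2 × Fin 2,
      (D * (C ⊗ₖ B) * Dᴴ) i j = f i * (C i.1 j.1 * B i.2 j.2) * star (f j) := by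
    intro i j
    rw [hDf]
    simp [Matrix.diagonal_conjTranspose, Matrix.diagonal_mul, Matrix.mul_diagonal,
      Matrix.kroneckerMap_apply, mul_assoc]
  -- evaluate key entries
  have key01 := congrFun (congrFun hEq ((0 : Fin 2), (0 : Fin 2))) ((0 : Fin 2), (1 : Fin 2))
  have key10 := congrFun (congrFun hEq ((1 : Fin 2), (1 : Fin 2))) ((1 : Fin 2), (1 : Fin 2) - 1)
  rw [hentry] at key01 key10
  simp only [Matrix.kroneckerMap_apply] at key01 key10
  rw [hC, hB] at key01 key10
  norm_num at key01 key10
  -- key01 : f (0,0) * ω * star (f (0,1)) = g₁ 0 0 * g₂ 0 1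
  -- key10 : f (1,1) * ω⁻¹ * star (f (1,0)) = g₁ 1 1 * g₂ 1 0
  set a := f 0 with ha
  set b := f (0, 1) with hb
  set c := f (1, 0) with hc
  set d := f 1 with hd2
  have hcb : (starRingEnd ℂ) b = b⁻¹ := eq_inv_of_mul_eq_one_right (hunit (0, 1))
  have hcc : (starRingEnd ℂ) c = c⁻¹ := eq_inv_of_mul_eq_one_right (hunit (1, 0))
  have hb0 : (starRingEnd ℂ) b ≠ 0 := by
    simp only [ne_eq, map_eq_zero]; exact hfne (0, 1)
  rcases hclass g₁ hg₁ with ⟨p, hp, rfl⟩ | ⟨p, hp, rfl⟩ <;>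
    rcases hclass g₂ hg₂ with ⟨r, hr, rfl⟩ | ⟨r, hr, rfl⟩
  · exfalso
    norm_num at key01
    rcases key01 with (h | h) | h
    exacts [hfne 0 h, hω0 h, hfne (0, 1) h]
  · -- main case: g₁ diagonal, g₂ antidiagonal
    norm_num at key01 key10
    have had : a * d = b * c := by
      have h1 : a * ω * (starRingEnd ℂ) b * (d * ω⁻¹ * (starRingEnd ℂ) c) =
          p * r * (p⁻¹ * r⁻¹) := by rw [← key01, ← key10]; rfl
      rw [hcb, hcc] at h1
      field_simp [hfne (0, 1), hfne (1, 0), hω0] at h1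
      have h2 : ω * (a * d) = ω * (b * c) := by
        rw [(div_eq_one_iff_eq (mul_ne_zero (hfne (0, 1)) (hfne (1, 0)))).mp h1]
      exact mul_left_cancel₀ hω0 h2
    have ha0 : a ≠ 0 := hfne 0
    have hd : d = c * (a⁻¹ * b) := by field_simp; linear_combination had
    refine ⟨!![a, 0; 0, c], !![1, 0; 0, a⁻¹ * b], ?_, ?_, ?_⟩
    · rw [Matrix.mem_unitaryGroup_iff]
      ext i j
      have hu0 : a * (starRingEnd ℂ) a = 1 := hunit 0
      have huc : c * (starRingEnd ℂ) c = 1 := hunit (1, 0)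
      fin_cases i <;> fin_cases j <;>
        simp [Matrix.mul_apply, Fin.sum_univ_two, Matrix.star_eq_conjTranspose,
          Matrix.conjTranspose_apply, hu0, huc]
    · rw [Matrix.mem_unitaryGroup_iff]
      have hca : (starRingEnd ℂ) a = a⁻¹ := eq_inv_of_mul_eq_one_right (hunit 0)
      have this : a⁻¹ * b * (((starRingEnd ℂ) a)⁻¹ * (starRingEnd ℂ) b) = 1 := by
        rw [hca, hcb, inv_inv]
        field_simp [hfne 0, hfne (0, 1)]
        exact div_self (hfne (0, 1))
      ext i j
      fin_cases i <;> fin_cases j <;>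
        simp [Matrix.mul_apply, Fin.sum_univ_two, Matrix.star_eq_conjTranspose,
          Matrix.conjTranspose_apply, this]
    · rw [hDf]
      ext ⟨i1, i2⟩ ⟨j1, j2⟩
      fin_cases i1 <;> fin_cases i2 <;> fin_cases j1 <;> fin_cases j2 <;>
        simp [Matrix.diagonal_apply, Matrix.kroneckerMap_apply, Prod.ext_iff, ← ha, ← hb,
          ← hc, ← hd2, hd, ha0, (show f (1, 1) = d from rfl), (show f (0, 0) = a from rfl)]
  · exfalso
    norm_num at key01
    rcases key01 with (h | h) | h
    exacts [hfne 0 h, hω0 h, hfne (0, 1) h]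
  · exfalso
    norm_num at key01
    rcases key01 with (h | h) | h
    exacts [hfne 0 h, hω0 h, hfne (0, 1) h]
end

section
/- Let n ≥ 3 be odd, ω_{2n} = e^{2πi/(2n)}, and let G' ⊆ U(2) be the matrix group generated by C = diag(ω_{2n}, ω_{2n}^{-1}) and B = [[0,1],[1,0]] (G' is isomorphic to the dihedral group of order 4n). Then G' is not entangling: every N ∈ U(4) with N (G'⊗G') N† = G'⊗G' satisfies N = A⊗B' or N = SWAP·(A⊗B') for some A, B' ∈ U(2). Consequently, for odd n the matrix group generated by diag(ω_n, ω_n^{-1}) and B has no entangling projective normaliser of its tensor square. -/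
open Matrix Kronecker

/-- The SWAP operation on ℂ² ⊗ ℂ², as a matrix. -/
def swapMat : Matrix (Fin 2 × Fin 2) (Fin 2 × Fin 2) ℂ :=
  fun p q => if p.1 = q.2 ∧ p.2 = q.1 then 1 else 0

/-- A two-qubit unitary `V` is entangling if it is neither of the form `A ⊗ B`
nor `SWAP · (A ⊗ B)` for unitaries `A, B`. -/
def Entangling (V : Matrix (Fin 2 × Fin 2) (Fin 2 × Fin 2) ℂ) : Prop :=
  ∀ A B : Matrix (Fin 2) (Fin 2) ℂ,
    A ∈ Matrix.unitaryGroup (Fin 2) ℂ → B ∈ Matrix.unitaryGroup (Fin 2) ℂ →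
      V ≠ A ⊗ₖ B ∧ V ≠ swapMat * (A ⊗ₖ B)

/-- `N` is a projective normaliser of the set of matrices `S`. -/
def ProjNorm {m : Type*} [Fintype m] (N : Matrix m m ℂ) (S : Set (Matrix m m ℂ)) : Prop :=
  ∀ g ∈ S, ∃ g' ∈ S, ∃ c : ℂ, ‖c‖ = 1 ∧ N * g * Nᴴ = c • g'


/-!
The tensor square of `G' = ⟨diag(ω, ω⁻¹), B⟩` contains `X₁ = C ⊗ 1` and `X₂ = 1 ⊗ C`, whose
spectra are `{ω, ω, ω⁻¹, ω⁻¹}` and whose traces do not vanish. A unitary `N` mapping `G' ⊗ G'`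
into itself must send each `Xᵢ` to an element of `G' ⊗ G'` with the same spectrum and non-zero
trace, and the only such elements are `diag(ω^±1, ω^∓1) ⊗ 1` and `1 ⊗ diag(ω^±1, ω^∓1)`.
Injectivity and `X₁ X₂ ≠ 1` force `X₁` and `X₂` onto different tensor factors; after an optional
SWAP and a correction by `P ⊗ Q` with `P, Q ∈ {1, B}`, `N` commutes with `X₁` and `X₂`, so it is
diagonal, and the image of `B ⊗ 1` forces the diagonal to be a tensor product.

For odd `n`, a projective normaliser `M` of `G ⊗ G` (with `G = ⟨diag(ω², ω⁻²), B⟩`) has phases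
`±1` on `B ⊗ 1` and `1` on `diag(ω², ω⁻²) ⊗ 1`: the only scalar in `G ⊗ G` is `1`, the generators
have orders `2` and `n`, and `(B · diag(ω², ω⁻²))² = 1`. Since `G' = ±G`, `M` maps `G' ⊗ G'` into
itself, so by the first part it is not entangling.
-/

noncomputable section

namespace TensorDihedral

section LinearAlgebra

variable {ι R : Type*} [Fintype ι]

lemma exists_eq_of_prod_sub_eq [CommRing R] [NoZeroDivisors R] [Nontrivial R] {u v : ι → R}
    (h : ∀ l, ∏ p, (u p - l) = ∏ p, (v p - l)) (q : ι) : ∃ p, u p = v q := by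
  have : ∏ p, (u p - v q) = 0 := by
    rw [h]; exact Finset.prod_eq_zero (Finset.mem_univ q) (sub_self _)
  obtain ⟨p, -, hp⟩ := Finset.prod_eq_zero_iff.1 this
  exact ⟨p, sub_eq_zero.1 hp⟩

variable [DecidableEq ι]

abbrev unitaryConj {N : Matrix ι ι ℂ} (hN : N ∈ unitaryGroup ι ℂ) :
    Matrix ι ι ℂ ≃⋆ₐ[ℂ] Matrix ι ι ℂ :=
  Unitary.conjStarAlgAut ℂ _ ⟨N, hN⟩

lemma unitaryConj_apply {N : Matrix ι ι ℂ} (hN : N ∈ unitaryGroup ι ℂ) (x : Matrix ι ι ℂ) :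
    unitaryConj hN x = N * x * Nᴴ := rfl

lemma trace_unitary_conj {N : Matrix ι ι ℂ} (hN : N ∈ unitaryGroup ι ℂ) (x : Matrix ι ι ℂ) :
    (N * x * Nᴴ).trace = x.trace := by
  rw [trace_mul_cycle, ← star_eq_conjTranspose, Unitary.star_mul_self_of_mem hN, one_mul]

lemma det_unitary_conj_sub {N : Matrix ι ι ℂ} (hN : N ∈ unitaryGroup ι ℂ) (x : Matrix ι ι ℂ)
    (l : ℂ) : (N * x * Nᴴ - l • 1).det = (x - l • 1).det := by
  have : N * x * Nᴴ - l • 1 = N * (x - l • 1) * Nᴴ := by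
    rw [← unitaryConj_apply hN (x - l • 1), map_sub, map_smul, map_one, unitaryConj_apply]
  rw [this]
  exact det_conj_of_mul_eq_one (Unitary.mul_star_self_of_mem hN) (Unitary.star_mul_self_of_mem hN)

lemma commute_of_conj_eq {N X : Matrix ι ι ℂ} (hN : N ∈ unitaryGroup ι ℂ) (h : N * X * Nᴴ = X) :
    Commute N X :=
  calc N * X = N * X * (Nᴴ * N) := by
        rw [← star_eq_conjTranspose, Unitary.star_mul_self_of_mem hN, mul_one]
    _ = X * N := by rw [← mul_assoc, h]

lemma diagonal_mem_unitaryGroup_iff {d : ι → ℂ} :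
    diagonal d ∈ unitaryGroup ι ℂ ↔ ∀ p, star (d p) * d p = 1 := by
  rw [mem_unitaryGroup_iff', star_eq_conjTranspose, diagonal_conjTranspose, diagonal_mul_diagonal,
    ← diagonal_one, diagonal_eq_diagonal_iff]
  rfl

lemma det_diagonal_sub_smul_one [CommRing R] (v : ι → R) (l : R) :
    (diagonal v - l • 1).det = ∏ p, (v p - l) := by
  rw [smul_one_eq_diagonal, diagonal_sub, det_diagonal]

lemma eq_diagonal_of_commute [CommRing R] [NoZeroDivisors R] {A : Matrix ι ι R} {u v : ι → R}
    (hu : Commute A (diagonal u)) (hv : Commute A (diagonal v))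
    (huv : ∀ p q, u p = u q → v p = v q → p = q) : A = diagonal fun p => A p p := by
  ext p q
  by_cases hpq : p = q
  · subst hpq; simp
  rw [diagonal_apply_ne _ hpq]
  by_contra hA
  have key {w : ι → R} (hw : Commute A (diagonal w)) : w p = w q := by
    have := congrFun (congrFun hw.eq p) q
    simp only [mul_diagonal, diagonal_mul, mul_comm (w p)] at this
    exact (mul_left_cancel₀ hA this).symm
  exact hpq (huv p q (key hu) (key hv))

lemma pow_eq_one_of_conj_eq_smul {S : Submonoid (Matrix ι ι ℂ)}
    (hS : ∀ l : ℂ, l ≠ 0 → l • (1 : Matrix ι ι ℂ) ∈ S → l = 1)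
    {M x t : Matrix ι ι ℂ} (hM : M ∈ unitaryGroup ι ℂ) {c : ℂ} (hc : c ≠ 0) {k : ℕ}
    (hx : x ^ k = 1) (ht : t ∈ S) (h : M * x * Mᴴ = c • t) : c ^ k = 1 := by
  have hck : c ^ k • t ^ k = 1 := by
    rw [← smul_pow, ← h, ← unitaryConj_apply hM, ← map_pow, hx, map_one]
  have ht' : t ^ k = (c ^ k)⁻¹ • (1 : Matrix ι ι ℂ) := by
    rw [← hck, smul_smul, inv_mul_cancel₀ (pow_ne_zero k hc), one_smul]
  exact inv_eq_one.1 (hS _ (inv_ne_zero (pow_ne_zero k hc)) (ht' ▸ pow_mem ht k))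

end LinearAlgebra

def rotMat (z : ℂ) : Matrix (Fin 2) (Fin 2) ℂ := !![z, 0; 0, z⁻¹]

def reflMat (z : ℂ) : Matrix (Fin 2) (Fin 2) ℂ := !![0, z⁻¹; z, 0]

def dihedral (ζ : ℂ) : Submonoid (Matrix (Fin 2) (Fin 2) ℂ) :=
  Submonoid.closure {rotMat ζ, reflMat 1}

@[simp] lemma rotMat_mul_rotMat (z w : ℂ) : rotMat z * rotMat w = rotMat (z * w) := by
  simp [rotMat, mul_comm]

@[simp] lemma rotMat_mul_reflMat (z w : ℂ) : rotMat z * reflMat w = reflMat (z⁻¹ * w) := by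
  simp [rotMat, reflMat, mul_comm]

@[simp] lemma reflMat_mul_rotMat (z w : ℂ) : reflMat z * rotMat w = reflMat (z * w) := by
  simp [rotMat, reflMat, mul_comm]

@[simp] lemma reflMat_mul_reflMat (z w : ℂ) : reflMat z * reflMat w = rotMat (z⁻¹ * w) := by
  simp [rotMat, reflMat, mul_comm]

@[simp] lemma rotMat_one : rotMat 1 = 1 := by
  simp [rotMat, one_fin_two]

lemma neg_rotMat (z : ℂ) : -rotMat z = rotMat (-z) := by
  ext i j; fin_cases i <;> fin_cases j <;> simp [rotMat, inv_neg]

lemma rotMat_pow (z : ℂ) (k : ℕ) : rotMat z ^ k = rotMat (z ^ k) := by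
  induction k with
  | zero => simp
  | succ k ih => rw [pow_succ, ih, rotMat_mul_rotMat, pow_succ]

lemma reflMat_one : reflMat 1 = !![0, 1; 1, 0] := by simp [reflMat]

lemma reflMat_one_conjTranspose : (reflMat 1)ᴴ = reflMat 1 := by
  ext i j; fin_cases i <;> fin_cases j <;> simp [reflMat]

lemma rotMat_eq_diagonal (z : ℂ) : rotMat z = diagonal ![z, z⁻¹] := by
  ext i j; fin_cases i <;> fin_cases j <;> simp [rotMat]

lemma trace_rotMat (z : ℂ) : (rotMat z).trace = z + z⁻¹ := by
  simp [rotMat, trace_fin_two]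

lemma trace_reflMat (z : ℂ) : (reflMat z).trace = 0 := by
  simp [reflMat, trace_fin_two]

lemma rotMat_mem_dihedral (ζ : ℂ) : rotMat ζ ∈ dihedral ζ := Submonoid.subset_closure (.inl rfl)

lemma reflMat_one_mem_dihedral (ζ : ℂ) : reflMat 1 ∈ dihedral ζ :=
  Submonoid.subset_closure (.inr rfl)

lemma exists_zpow_of_mem_dihedral {ζ : ℂ} (hζ : ζ ≠ 0) {g : Matrix (Fin 2) (Fin 2) ℂ}
    (hg : g ∈ dihedral ζ) : ∃ k : ℤ, g = rotMat (ζ ^ k) ∨ g = reflMat (ζ ^ k) := by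
  induction hg using Submonoid.closure_induction with
  | mem x hx =>
    rcases hx with rfl | rfl
    · exact ⟨1, .inl (by simp)⟩
    · exact ⟨0, .inr (by simp)⟩
  | one => exact ⟨0, .inl (by simp)⟩
  | mul x y _ _ hx hy =>
    obtain ⟨k, rfl | rfl⟩ := hx <;> obtain ⟨l, rfl | rfl⟩ := hy
    · exact ⟨k + l, .inl (by simp [zpow_add₀ hζ])⟩
    · exact ⟨-k + l, .inr (by simp [zpow_add₀ hζ, _root_.zpow_neg])⟩
    · exact ⟨k + l, .inr (by simp [zpow_add₀ hζ])⟩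
    · exact ⟨-k + l, .inl (by simp [zpow_add₀ hζ, _root_.zpow_neg])⟩

lemma exists_rotMat_of_trace_ne_zero {ζ : ℂ} (hζ : ζ ≠ 0) {g : Matrix (Fin 2) (Fin 2) ℂ}
    (hg : g ∈ dihedral ζ) (htr : g.trace ≠ 0) : ∃ z, g = rotMat z := by
  obtain ⟨k, rfl | rfl⟩ := exists_zpow_of_mem_dihedral hζ hg
  · exact ⟨_, rfl⟩
  · exact absurd (trace_reflMat _) htr

lemma dihedral_sq_le (ω : ℂ) : dihedral (ω ^ 2) ≤ dihedral ω := by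
  refine Submonoid.closure_le.2 ?_
  rintro _ (rfl | rfl)
  · rw [sq, ← rotMat_mul_rotMat]
    exact mul_mem (rotMat_mem_dihedral ω) (rotMat_mem_dihedral ω)
  · exact reflMat_one_mem_dihedral ω

lemma neg_one_mem_dihedral {n : ℕ} {ω : ℂ} (hω : ω ^ n = -1) : -1 ∈ dihedral ω := by
  rw [← rotMat_one, neg_rotMat, ← hω, ← rotMat_pow]
  exact pow_mem (rotMat_mem_dihedral ω) n

lemma rotMat_kron_rotMat (z w : ℂ) :
    rotMat z ⊗ₖ rotMat w = diagonal fun p : Fin 2 × Fin 2 => ![z, z⁻¹] p.1 * ![w, w⁻¹] p.2 := by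
  rw [rotMat_eq_diagonal, rotMat_eq_diagonal, diagonal_kronecker_diagonal]

lemma rotMat_kron_one (z : ℂ) :
    rotMat z ⊗ₖ (1 : Matrix (Fin 2) (Fin 2) ℂ) =
      diagonal fun p : Fin 2 × Fin 2 => ![z, z⁻¹] p.1 * ![1, 1⁻¹] p.2 := by
  rw [← rotMat_kron_rotMat, rotMat_one]

lemma one_kron_rotMat (z : ℂ) :
    (1 : Matrix (Fin 2) (Fin 2) ℂ) ⊗ₖ rotMat z =
      diagonal fun p : Fin 2 × Fin 2 => ![1, 1⁻¹] p.1 * ![z, z⁻¹] p.2 := by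
  rw [← rotMat_kron_rotMat, rotMat_one]

lemma rotMat_kron_rotMat_of_inv_eq_right {w : ℂ} (hw : w⁻¹ = w) (z : ℂ) :
    rotMat z ⊗ₖ rotMat w = rotMat (z * w) ⊗ₖ 1 := by
  rw [← rotMat_one, rotMat_kron_rotMat, rotMat_kron_rotMat]
  congr; ext ⟨i, j⟩; fin_cases i <;> fin_cases j <;> simp [hw, mul_comm]

lemma rotMat_kron_rotMat_of_inv_eq_left {z : ℂ} (hz : z⁻¹ = z) (w : ℂ) :
    rotMat z ⊗ₖ rotMat w = 1 ⊗ₖ rotMat (z * w) := by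
  rw [← rotMat_one, rotMat_kron_rotMat, rotMat_kron_rotMat]
  congr; ext ⟨i, j⟩; fin_cases i <;> fin_cases j <;> simp [hz, mul_comm]

lemma kronecker_one_pow (a : Matrix (Fin 2) (Fin 2) ℂ) (k : ℕ) :
    (a ⊗ₖ (1 : Matrix (Fin 2) (Fin 2) ℂ)) ^ k = (a ^ k) ⊗ₖ 1 := by
  induction k with
  | zero => simp
  | succ k ih => rw [pow_succ, ih, ← mul_kronecker_mul, mul_one, pow_succ]

lemma swapMat_mul_apply (X : Matrix (Fin 2 × Fin 2) (Fin 2 × Fin 2) ℂ) (p q : Fin 2 × Fin 2) :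
    (swapMat * X) p q = X p.swap q := by
  rw [mul_apply, Finset.sum_eq_single p.swap] <;> aesop (add simp swapMat)

lemma mul_swapMat_apply (X : Matrix (Fin 2 × Fin 2) (Fin 2 × Fin 2) ℂ) (p q : Fin 2 × Fin 2) :
    (X * swapMat) p q = X p q.swap := by
  rw [mul_apply, Finset.sum_eq_single q.swap] <;> aesop (add simp swapMat)

lemma swapMat_mul_kronecker_mul_swapMat (a b : Matrix (Fin 2) (Fin 2) ℂ) :
    swapMat * (a ⊗ₖ b) * swapMat = b ⊗ₖ a := by
  ext p q
  rw [mul_swapMat_apply, swapMat_mul_apply]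
  simp [mul_comm]

lemma swapMat_mul_swapMat : swapMat * swapMat = 1 := by
  ext p q
  rw [swapMat_mul_apply]
  simp only [swapMat, one_apply, Prod.ext_iff, Prod.fst_swap, Prod.snd_swap]
  aesop

lemma swapMat_conjTranspose : swapMatᴴ = swapMat := by
  ext p q
  simp only [conjTranspose_apply, swapMat]
  aesop

lemma swapMat_mem_unitaryGroup : swapMat ∈ unitaryGroup (Fin 2 × Fin 2) ℂ := by
  rw [mem_unitaryGroup_iff, star_eq_conjTranspose, swapMat_conjTranspose, swapMat_mul_swapMat]

lemma conj_mul_swapMat (M x : Matrix (Fin 2 × Fin 2) (Fin 2 × Fin 2) ℂ) :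
    M * swapMat * x * (M * swapMat)ᴴ = M * (swapMat * x * swapMat) * Mᴴ := by
  simp only [conjTranspose_mul, swapMat_conjTranspose, mul_assoc]

def tensorSubmonoid (H : Submonoid (Matrix (Fin 2) (Fin 2) ℂ)) :
    Submonoid (Matrix (Fin 2 × Fin 2) (Fin 2 × Fin 2) ℂ) where
  carrier := tensorSet H
  mul_mem' := by
    rintro _ _ ⟨a, ha, b, hb, rfl⟩ ⟨c, hc, d, hd, rfl⟩
    exact ⟨a * c, mul_mem ha hc, b * d, mul_mem hb hd, (mul_kronecker_mul a c b d).symm⟩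
  one_mem' := ⟨1, one_mem H, 1, one_mem H, one_kronecker_one.symm⟩

lemma kron_mem_tensorSet {S : Set (Matrix (Fin 2) (Fin 2) ℂ)} {a b : Matrix (Fin 2) (Fin 2) ℂ}
    (ha : a ∈ S) (hb : b ∈ S) : a ⊗ₖ b ∈ tensorSet S := ⟨a, ha, b, hb, rfl⟩

lemma neg_mem_tensorSet {H : Submonoid (Matrix (Fin 2) (Fin 2) ℂ)} (hH : -1 ∈ H)
    {x : Matrix (Fin 2 × Fin 2) (Fin 2 × Fin 2) ℂ} (hx : x ∈ tensorSet H) : -x ∈ tensorSet H := by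
  obtain ⟨a, ha, b, hb, rfl⟩ := hx
  refine ⟨-1 * a, mul_mem hH ha, b, hb, ?_⟩
  rw [neg_one_mul]
  ext; simp

section Normaliser

variable {ω : ℂ} {N : Matrix (Fin 2 × Fin 2) (Fin 2 × Fin 2) ℂ}

lemma inv_eq_of_mem_pair_of_ne {a b : ℂ} (ha : a = ω ∨ a = ω⁻¹) (hb : b = ω ∨ b = ω⁻¹)
    (hab : a ≠ b) : b = a⁻¹ := by
  rcases ha with rfl | rfl <;> rcases hb with rfl | rfl <;> simp_all

lemma eq_or_mul_eq_one_of_mem_pair {e₁ e₂ : ℂ} (hω : ω ≠ 0) (he₁ : e₁ = ω ∨ e₁ = ω⁻¹)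
    (he₂ : e₂ = ω ∨ e₂ = ω⁻¹) : e₁ = e₂ ∨ e₁ * e₂ = 1 := by
  rcases he₁ with rfl | rfl <;> rcases he₂ with rfl | rfl <;> simp [hω]

lemma rotMat_kron_rotMat_eq_of_mem_pair {z w : ℂ} (hω : ω ≠ 0)
    (h₁ : z * w = ω ∨ z * w = ω⁻¹) (h₂ : z * w⁻¹ = ω ∨ z * w⁻¹ = ω⁻¹) :
    rotMat z ⊗ₖ rotMat w = rotMat (z * w) ⊗ₖ 1 ∨ rotMat z ⊗ₖ rotMat w = 1 ⊗ₖ rotMat (z * w) := by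
  have hzw : z * w ≠ 0 := by rcases h₁ with h | h <;> simp [h, hω]
  by_cases h : z * w = z * w⁻¹
  · exact .inl <| rotMat_kron_rotMat_of_inv_eq_right
      (mul_left_cancel₀ (left_ne_zero_of_mul hzw) h).symm z
  · have := inv_eq_of_mem_pair_of_ne h₁ h₂ h
    rw [mul_inv] at this
    exact .inr <| rotMat_kron_rotMat_of_inv_eq_left
      (mul_right_cancel₀ (inv_ne_zero (right_ne_zero_of_mul hzw)) this).symm w

lemma conj_rotMat_kron_eq (hω : ω + ω⁻¹ ≠ 0) (hN : N ∈ unitaryGroup _ ℂ)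
    (hmaps : ∀ x ∈ tensorSet (dihedral ω), N * x * Nᴴ ∈ tensorSet (dihedral ω))
    {X : Matrix (Fin 2 × Fin 2) (Fin 2 × Fin 2) ℂ} (hX : X = rotMat ω ⊗ₖ 1 ∨ X = 1 ⊗ₖ rotMat ω) :
    ∃ e, (e = ω ∨ e = ω⁻¹) ∧ (N * X * Nᴴ = rotMat e ⊗ₖ 1 ∨ N * X * Nᴴ = 1 ⊗ₖ rotMat e) := by
  have hω0 : ω ≠ 0 := by rintro rfl; simp at hω
  have hXT : X ∈ tensorSet (dihedral ω) := by
    rcases hX with rfl | rfl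
    · exact kron_mem_tensorSet (rotMat_mem_dihedral ω) (one_mem _)
    · exact kron_mem_tensorSet (one_mem _) (rotMat_mem_dihedral ω)
  obtain ⟨a, ha, b, hb, hY⟩ := hmaps X hXT
  have htr : a.trace * b.trace ≠ 0 := by
    rw [← trace_kronecker, ← hY, trace_unitary_conj hN]
    rcases hX with rfl | rfl <;> simp [trace_kronecker, trace_rotMat, hω]
  obtain ⟨z, rfl⟩ := exists_rotMat_of_trace_ne_zero hω0 ha (left_ne_zero_of_mul htr)
  obtain ⟨w, rfl⟩ := exists_rotMat_of_trace_ne_zero hω0 hb (right_ne_zero_of_mul htr)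
  obtain ⟨x, y, hXxy, hu⟩ : ∃ x y, X = rotMat x ⊗ₖ rotMat y ∧ ∀ p : Fin 2 × Fin 2,
      ![x, x⁻¹] p.1 * ![y, y⁻¹] p.2 = ω ∨ ![x, x⁻¹] p.1 * ![y, y⁻¹] p.2 = ω⁻¹ := by
    rcases hX with rfl | rfl
    · exact ⟨ω, 1, by rw [rotMat_one], fun ⟨i, j⟩ => by fin_cases i <;> fin_cases j <;> simp⟩
    · exact ⟨1, ω, by rw [rotMat_one], fun ⟨i, j⟩ => by fin_cases i <;> fin_cases j <;> simp⟩
  have hspec (q : Fin 2 × Fin 2) :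
      ![z, z⁻¹] q.1 * ![w, w⁻¹] q.2 = ω ∨ ![z, z⁻¹] q.1 * ![w, w⁻¹] q.2 = ω⁻¹ := by
    have hdet (l : ℂ) : ∏ p : Fin 2 × Fin 2, (![x, x⁻¹] p.1 * ![y, y⁻¹] p.2 - l) =
        ∏ p : Fin 2 × Fin 2, (![z, z⁻¹] p.1 * ![w, w⁻¹] p.2 - l) := by
      rw [← det_diagonal_sub_smul_one, ← det_diagonal_sub_smul_one, ← rotMat_kron_rotMat,
        ← rotMat_kron_rotMat, ← hY, det_unitary_conj_sub hN, hXxy]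
    obtain ⟨p, hp⟩ := exists_eq_of_prod_sub_eq hdet q
    exact hp ▸ hu p
  have h₁ := hspec (0, 0)
  have h₂ := hspec (0, 1)
  simp only [Fin.isValue, cons_val_zero, cons_val_one] at h₁ h₂
  exact ⟨z * w, h₁, hY ▸ rotMat_kron_rotMat_eq_of_mem_pair hω0 h₁ h₂⟩

lemma conj_rotMat_kron_ne (hω : ω ≠ ω⁻¹) (hN : N ∈ unitaryGroup _ ℂ) :
    N * (rotMat ω ⊗ₖ 1) * Nᴴ ≠ N * (1 ⊗ₖ rotMat ω) * Nᴴ ∧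
      N * (rotMat ω ⊗ₖ 1) * Nᴴ * (N * (1 ⊗ₖ rotMat ω) * Nᴴ) ≠ 1 := by
  constructor
  · intro h
    have := congrFun (congrFun ((unitaryConj hN).injective h) (1, 0)) (1, 0)
    simp [rotMat] at this
    exact hω this.symm
  · intro h
    have h' : unitaryConj hN ((rotMat ω ⊗ₖ 1) * (1 ⊗ₖ rotMat ω)) = unitaryConj hN 1 := by
      rw [map_mul, map_one]; exact h
    have := congrFun (congrFun ((unitaryConj hN).injective h') (0, 0)) (0, 0)
    simp [← mul_kronecker_mul, rotMat] at this
    exact hω (eq_inv_of_mul_eq_one_left this)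

lemma exists_involution_conj_rotMat {e : ℂ} (he : e = ω ∨ e = ω⁻¹) :
    ∃ P ∈ dihedral ω, Pᴴ = P ∧ P * P = 1 ∧ P * rotMat e * P = rotMat ω := by
  rcases he with rfl | rfl
  · exact ⟨1, one_mem _, by simp⟩
  · exact ⟨reflMat 1, reflMat_one_mem_dihedral ω, reflMat_one_conjTranspose, by simp⟩

lemma mul_eq_mul_of_diagonal_conj_mem (hω : ω ≠ 0) {d : Fin 2 × Fin 2 → ℂ}
    (hd : ∀ p, star (d p) * d p = 1)
    (hmem : diagonal d * (reflMat 1 ⊗ₖ 1) * (diagonal d)ᴴ ∈ tensorSet (dihedral ω)) :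
    d (0, 0) * d (1, 1) = d (0, 1) * d (1, 0) := by
  obtain ⟨a, ha, b, hb, hab⟩ := hmem
  have entry (p q : Fin 2 × Fin 2) :
      d p * (reflMat 1 ⊗ₖ (1 : Matrix (Fin 2) (Fin 2) ℂ)) p q * star (d q) =
        a p.1 q.1 * b p.2 q.2 := by
    simpa [diagonal_conjTranspose] using congrFun (congrFun hab p) q
  have hne (p) : d p ≠ 0 := fun h => by simpa [h] using hd p
  have e₁ := entry (0, 0) (1, 0)
  have e₂ := entry (1, 0) (0, 0)
  have e₃ := entry (0, 1) (1, 1)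
  simp only [kroneckerMap_apply, one_apply_eq, mul_one, Fin.isValue] at e₁ e₂ e₃
  have h₁ : a 0 1 * b 0 0 ≠ 0 := by
    rw [← e₁]; simp [reflMat, hne]
  obtain ⟨z₁, rfl⟩ : ∃ z, a = reflMat z := by
    obtain ⟨k, rfl | rfl⟩ := exists_zpow_of_mem_dihedral hω ha
    · simp [rotMat] at h₁
    · exact ⟨_, rfl⟩
  obtain ⟨z₂, rfl⟩ : ∃ z, b = rotMat z := by
    obtain ⟨k, rfl | rfl⟩ := exists_zpow_of_mem_dihedral hω hb
    · exact ⟨_, rfl⟩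
    · simp [reflMat] at h₁
  simp only [reflMat, rotMat] at e₁ e₂ e₃
  simp only [Fin.isValue, of_apply, cons_val', cons_val_zero, cons_val_one, cons_val_fin_one,
    inv_one] at e₁ e₂ e₃
  have hz₁ : z₁ ≠ 0 := by rintro rfl; simp [hne] at e₂
  have hz₂ : z₂⁻¹ = z₂ := by
    refine inv_eq_of_mul_eq_one_right ?_
    rw [show z₂ * z₂ = z₁⁻¹ * z₂ * (z₁ * z₂) by field_simp, ← e₁, ← e₂]
    linear_combination (star (d (1, 0)) * d (1, 0)) * hd (0, 0) + hd (1, 0)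
  rw [hz₂, ← e₁] at e₃
  linear_combination (-(d (1, 0) * d (1, 1))) * e₃ - d (0, 0) * d (1, 1) * hd (1, 0)
    + d (0, 1) * d (1, 0) * hd (1, 1)

lemma exists_kron_eq_diagonal {d : Fin 2 × Fin 2 → ℂ} (hd : ∀ p, star (d p) * d p = 1)
    (h : d (0, 0) * d (1, 1) = d (0, 1) * d (1, 0)) :
    ∃ A B : Matrix (Fin 2) (Fin 2) ℂ, A ∈ unitaryGroup (Fin 2) ℂ ∧ B ∈ unitaryGroup (Fin 2) ℂ ∧
      diagonal d = A ⊗ₖ B := by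
  have h₀ : d (0, 0) ≠ 0 := fun h0 => by simpa [h0] using hd (0, 0)
  refine ⟨diagonal ![1, d (1, 0) / d (0, 0)], diagonal ![d (0, 0), d (0, 1)], ?_, ?_, ?_⟩
  · rw [diagonal_mem_unitaryGroup_iff]
    intro i; fin_cases i
    · simp
    · simp only [Fin.isValue, Fin.mk_one, cons_val_one, cons_val_fin_one]
      rw [star_div₀, div_mul_div_comm, hd, hd, div_one]
  · rw [diagonal_mem_unitaryGroup_iff]
    intro i; fin_cases i <;> exact hd _
  · rw [diagonal_kronecker_diagonal]
    congr; ext ⟨i, j⟩; fin_cases i <;> fin_cases j <;> simp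
    · field_simp
    · field_simp; linear_combination h

lemma exists_kron_of_conj_eq (hω : ω ≠ ω⁻¹) (hN : N ∈ unitaryGroup _ ℂ)
    (hmem : N * (reflMat 1 ⊗ₖ 1) * Nᴴ ∈ tensorSet (dihedral ω)) {e₁ e₂ : ℂ}
    (he₁ : e₁ = ω ∨ e₁ = ω⁻¹) (he₂ : e₂ = ω ∨ e₂ = ω⁻¹)
    (h₁ : N * (rotMat ω ⊗ₖ 1) * Nᴴ = rotMat e₁ ⊗ₖ 1)
    (h₂ : N * (1 ⊗ₖ rotMat ω) * Nᴴ = 1 ⊗ₖ rotMat e₂) :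
    ∃ A B : Matrix (Fin 2) (Fin 2) ℂ, A ∈ unitaryGroup (Fin 2) ℂ ∧ B ∈ unitaryGroup (Fin 2) ℂ ∧
      N = A ⊗ₖ B := by
  have hω0 : ω ≠ 0 := by rintro rfl; simp at hω
  obtain ⟨P, hPG, hPH, hPP, hPe⟩ := exists_involution_conj_rotMat he₁
  obtain ⟨Q, hQG, hQH, hQQ, hQe⟩ := exists_involution_conj_rotMat he₂
  have hPU : P ∈ unitaryGroup (Fin 2) ℂ := by
    rw [mem_unitaryGroup_iff, star_eq_conjTranspose, hPH, hPP]
  have hQU : Q ∈ unitaryGroup (Fin 2) ℂ := by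
    rw [mem_unitaryGroup_iff, star_eq_conjTranspose, hQH, hQQ]
  set K := P ⊗ₖ Q
  have hKK : K * K = 1 := by rw [← mul_kronecker_mul, hPP, hQQ, one_kronecker_one]
  have hconj (x) : K * N * x * (K * N)ᴴ = K * (N * x * Nᴴ) * K := by
    simp only [K, conjTranspose_mul, conjTranspose_kronecker, hPH, hQH, mul_assoc]
  have hKNU : K * N ∈ unitaryGroup _ ℂ := mul_mem (kronecker_mem_unitary hPU hQU) hN
  have hc₁ : K * N * (rotMat ω ⊗ₖ 1) * (K * N)ᴴ = rotMat ω ⊗ₖ 1 := by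
    rw [hconj, h₁, ← mul_kronecker_mul, ← mul_kronecker_mul, hPe, mul_one, hQQ]
  have hc₂ : K * N * (1 ⊗ₖ rotMat ω) * (K * N)ᴴ = 1 ⊗ₖ rotMat ω := by
    rw [hconj, h₂, ← mul_kronecker_mul, ← mul_kronecker_mul, hQe, mul_one, hPP]
  have hdiag := eq_diagonal_of_commute
    (rotMat_kron_one ω ▸ commute_of_conj_eq hKNU hc₁)
    (one_kron_rotMat ω ▸ commute_of_conj_eq hKNU hc₂)
    (fun ⟨i, j⟩ ⟨k, l⟩ => by
      fin_cases i <;> fin_cases j <;> fin_cases k <;> fin_cases l <;> simp [hω, hω.symm])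
  have hKB : K * N * (reflMat 1 ⊗ₖ 1) * (K * N)ᴴ ∈ tensorSet (dihedral ω) := by
    have hK : K ∈ tensorSubmonoid (dihedral ω) := kron_mem_tensorSet hPG hQG
    rw [hconj]; exact mul_mem (mul_mem hK hmem) hK
  rw [hdiag] at hKNU hKB
  rw [diagonal_mem_unitaryGroup_iff] at hKNU
  obtain ⟨A, B, hA, hB, hAB⟩ :=
    exists_kron_eq_diagonal hKNU (mul_eq_mul_of_diagonal_conj_mem hω0 hKNU hKB)
  refine ⟨P * A, Q * B, mul_mem hPU hA, mul_mem hQU hB, ?_⟩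
  calc N = K * (K * N) := by rw [← mul_assoc, hKK, one_mul]
    _ = (P * A) ⊗ₖ (Q * B) := by rw [hdiag, hAB, mul_kronecker_mul]

lemma exists_swap_kron_of_conj_eq (hω : ω ≠ ω⁻¹) (hN : N ∈ unitaryGroup _ ℂ)
    (hmem : N * (reflMat 1 ⊗ₖ 1) * Nᴴ ∈ tensorSet (dihedral ω)) {e₁ e₂ : ℂ}
    (he₁ : e₁ = ω ∨ e₁ = ω⁻¹) (he₂ : e₂ = ω ∨ e₂ = ω⁻¹)
    (h₁ : N * (rotMat ω ⊗ₖ 1) * Nᴴ = 1 ⊗ₖ rotMat e₁)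
    (h₂ : N * (1 ⊗ₖ rotMat ω) * Nᴴ = rotMat e₂ ⊗ₖ 1) :
    ∃ A B : Matrix (Fin 2) (Fin 2) ℂ, A ∈ unitaryGroup (Fin 2) ℂ ∧ B ∈ unitaryGroup (Fin 2) ℂ ∧
      N = swapMat * (A ⊗ₖ B) := by
  have hconj (x) : swapMat * N * x * (swapMat * N)ᴴ = swapMat * (N * x * Nᴴ) * swapMat := by
    simp only [conjTranspose_mul, swapMat_conjTranspose, mul_assoc]
  have hSB : swapMat * N * (reflMat 1 ⊗ₖ 1) * (swapMat * N)ᴴ ∈ tensorSet (dihedral ω) := by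
    obtain ⟨a, ha, b, hb, hab⟩ := hmem
    rw [hconj, hab, swapMat_mul_kronecker_mul_swapMat]
    exact kron_mem_tensorSet hb ha
  obtain ⟨A, B, hA, hB, hAB⟩ :=
    exists_kron_of_conj_eq hω (mul_mem swapMat_mem_unitaryGroup hN) hSB he₁ he₂
      (by rw [hconj, h₁, swapMat_mul_kronecker_mul_swapMat])
      (by rw [hconj, h₂, swapMat_mul_kronecker_mul_swapMat])
  refine ⟨A, B, hA, hB, ?_⟩
  rw [← hAB, ← mul_assoc, swapMat_mul_swapMat, one_mul]

theorem exists_kron_or_swap_of_conj_mem (hω₁ : ω ≠ ω⁻¹) (hω₂ : ω + ω⁻¹ ≠ 0)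
    (hN : N ∈ unitaryGroup _ ℂ)
    (hmaps : ∀ x ∈ tensorSet (dihedral ω), N * x * Nᴴ ∈ tensorSet (dihedral ω)) :
    ∃ A B : Matrix (Fin 2) (Fin 2) ℂ, A ∈ unitaryGroup (Fin 2) ℂ ∧ B ∈ unitaryGroup (Fin 2) ℂ ∧
      (N = A ⊗ₖ B ∨ N = swapMat * (A ⊗ₖ B)) := by
  have hω0 : ω ≠ 0 := by rintro rfl; simp at hω₁
  have hrefl := hmaps _ (kron_mem_tensorSet (reflMat_one_mem_dihedral ω) (one_mem _))
  obtain ⟨e₁, he₁, h₁⟩ := conj_rotMat_kron_eq hω₂ hN hmaps (.inl rfl)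
  obtain ⟨e₂, he₂, h₂⟩ := conj_rotMat_kron_eq hω₂ hN hmaps (.inr rfl)
  have hne := conj_rotMat_kron_ne hω₁ hN
  rcases h₁ with h₁ | h₁ <;> rcases h₂ with h₂ | h₂ <;> rw [h₁, h₂] at hne
  · rcases eq_or_mul_eq_one_of_mem_pair hω0 he₁ he₂ with rfl | he
    · exact (hne.1 rfl).elim
    · refine (hne.2 ?_).elim
      rw [← mul_kronecker_mul, rotMat_mul_rotMat, he, rotMat_one, mul_one, one_kronecker_one]
  · obtain ⟨A, B, hA, hB, hAB⟩ := exists_kron_of_conj_eq hω₁ hN hrefl he₁ he₂ h₁ h₂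
    exact ⟨A, B, hA, hB, .inl hAB⟩
  · obtain ⟨A, B, hA, hB, hAB⟩ := exists_swap_kron_of_conj_eq hω₁ hN hrefl he₁ he₂ h₁ h₂
    exact ⟨A, B, hA, hB, .inr hAB⟩
  · rcases eq_or_mul_eq_one_of_mem_pair hω0 he₁ he₂ with rfl | he
    · exact (hne.1 rfl).elim
    · refine (hne.2 ?_).elim
      rw [← mul_kronecker_mul, rotMat_mul_rotMat, he, rotMat_one, mul_one, one_kronecker_one]

end Normaliser

section ProjectiveNormaliser

variable {n : ℕ} {M : Matrix (Fin 2 × Fin 2) (Fin 2 × Fin 2) ℂ}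

lemma eq_one_of_smul_one_mem_tensorSet (hn : Odd n) {ζ : ℂ} (hζ : ζ ^ n = 1) {l : ℂ}
    (hl : l ≠ 0)
    (h : l • (1 : Matrix (Fin 2 × Fin 2) (Fin 2 × Fin 2) ℂ) ∈ tensorSet (dihedral ζ)) :
    l = 1 := by
  have hζ0 : ζ ≠ 0 := by rintro rfl; simp [hn.pos.ne'] at hζ
  obtain ⟨a, ha, b, hb, hab⟩ := h
  have hdiag (p : Fin 2 × Fin 2) : l = a p.1 p.1 * b p.2 p.2 := by
    simpa using congrFun (congrFun hab p) p
  have hrot {g : Matrix (Fin 2) (Fin 2) ℂ} (hg : g ∈ dihedral ζ) (hg0 : g 0 0 ≠ 0) :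
      ∃ z, z ^ n = 1 ∧ g = rotMat z := by
    obtain ⟨k, rfl | rfl⟩ := exists_zpow_of_mem_dihedral hζ0 hg
    · refine ⟨_, ?_, rfl⟩
      rw [← zpow_natCast, ← _root_.zpow_mul, mul_comm, _root_.zpow_mul, zpow_natCast, hζ,
        _root_.one_zpow]
    · simp [reflMat] at hg0
  have h00 := hdiag (0, 0)
  obtain ⟨z, hz, rfl⟩ := hrot ha (left_ne_zero_of_mul (h00 ▸ hl))
  obtain ⟨w, hw, rfl⟩ := hrot hb (right_ne_zero_of_mul (h00 ▸ hl))
  have h01 := hdiag (0, 1)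
  have h10 := hdiag (1, 0)
  simp [rotMat] at h00 h01 h10
  have hodd {u : ℂ} (hu : u ^ n = 1) (h : u = u⁻¹) : u = 1 := by
    have hu0 : u ≠ 0 := by rintro rfl; simp [hn.pos.ne'] at hu
    refine (pow_eq_one_iff_of_coprime (Nat.coprime_two_left.2 hn)).1 ⟨?_, hu⟩
    rw [sq]; nth_rewrite 2 [h]; exact mul_inv_cancel₀ hu0
  have hz0 : z ≠ 0 := by rintro rfl; simp [hn.pos.ne'] at hz
  have hw0 : w ≠ 0 := by rintro rfl; simp [hn.pos.ne'] at hw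
  rw [h00, hodd hz (mul_right_cancel₀ hw0 (h00.symm.trans h10)),
    hodd hw (mul_left_cancel₀ hz0 (h00.symm.trans h01)), mul_one]

lemma conj_mul_kronecker_one (hM : M ∈ unitaryGroup _ ℂ) (a b : Matrix (Fin 2) (Fin 2) ℂ) :
    M * ((a * b) ⊗ₖ 1) * Mᴴ = M * (a ⊗ₖ 1) * Mᴴ * (M * (b ⊗ₖ 1) * Mᴴ) := by
  rw [← mul_one (1 : Matrix (Fin 2) (Fin 2) ℂ), mul_kronecker_mul, ← unitaryConj_apply hM,
    map_mul, mul_one]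
  rfl

lemma conj_generators_of_projNorm (hn : Odd n) {ζ : ℂ} (hζ : ζ ^ n = 1)
    (hM : M ∈ unitaryGroup _ ℂ) (hP : ProjNorm M (tensorSet (dihedral ζ))) :
    M * (rotMat ζ ⊗ₖ 1) * Mᴴ ∈ tensorSet (dihedral ζ) ∧
      ∃ t ∈ tensorSet (dihedral ζ),
        M * (reflMat 1 ⊗ₖ 1) * Mᴴ = t ∨ M * (reflMat 1 ⊗ₖ 1) * Mᴴ = -t := by
  have hζ0 : ζ ≠ 0 := by rintro rfl; simp [hn.pos.ne'] at hζ
  have hS (l : ℂ) (hl : l ≠ 0) (h : l • 1 ∈ tensorSubmonoid (dihedral ζ)) : l = 1 :=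
    eq_one_of_smul_one_mem_tensorSet hn hζ hl h
  obtain ⟨tB, htB, cB, hcB, hB⟩ :=
    hP _ (kron_mem_tensorSet (reflMat_one_mem_dihedral ζ) (one_mem _))
  obtain ⟨tD, htD, cD, hcD, hD⟩ := hP _ (kron_mem_tensorSet (rotMat_mem_dihedral ζ) (one_mem _))
  have hcB0 : cB ≠ 0 := by rintro rfl; simp at hcB
  have hcD0 : cD ≠ 0 := by rintro rfl; simp at hcD
  have hcB2 : cB ^ 2 = 1 := pow_eq_one_of_conj_eq_smul hS hM hcB0
    (by simp [sq, ← mul_kronecker_mul]) htB hB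
  have hcDn : cD ^ n = 1 := pow_eq_one_of_conj_eq_smul hS hM hcD0
    (by rw [kronecker_one_pow, rotMat_pow, hζ, rotMat_one, one_kronecker_one]) htD hD
  have hcBD : (cB * cD) ^ 2 = 1 :=
    pow_eq_one_of_conj_eq_smul hS hM (mul_ne_zero hcB0 hcD0)
      (x := (reflMat 1 * rotMat ζ) ⊗ₖ 1)
      (by rw [sq, ← mul_kronecker_mul, mul_one, reflMat_mul_rotMat, reflMat_mul_reflMat, one_mul,
        inv_mul_cancel₀ hζ0, rotMat_one, one_kronecker_one])
      (mul_mem htB htD) (by rw [conj_mul_kronecker_one hM, hB, hD, smul_mul_smul_comm])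
  have hcD1 : cD = 1 := by
    refine (pow_eq_one_iff_of_coprime (Nat.coprime_two_left.2 hn)).1 ⟨?_, hcDn⟩
    rwa [mul_pow, hcB2, one_mul] at hcBD
  refine ⟨by rwa [hD, hcD1, one_smul], tB, htB, ?_⟩
  rcases sq_eq_one_iff.1 hcB2 with rfl | rfl
  · exact .inl (by rw [hB, one_smul])
  · exact .inr (by rw [hB, neg_one_smul])

lemma conj_kron_one_mem_of_projNorm (hn : Odd n) {ω : ℂ} (hω : ω ^ n = -1)
    (hM : M ∈ unitaryGroup _ ℂ) (hP : ProjNorm M (tensorSet (dihedral (ω ^ 2))))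
    {a : Matrix (Fin 2) (Fin 2) ℂ} (ha : a ∈ dihedral ω) :
    M * (a ⊗ₖ 1) * Mᴴ ∈ tensorSet (dihedral ω) := by
  have hζ : (ω ^ 2) ^ n = 1 := by rw [← pow_mul, mul_comm, pow_mul, hω]; norm_num
  have hsub {x} (hx : x ∈ tensorSet (dihedral (ω ^ 2))) : x ∈ tensorSet (dihedral ω) := by
    obtain ⟨a, ha, b, hb, rfl⟩ := hx
    exact kron_mem_tensorSet (dihedral_sq_le ω ha) (dihedral_sq_le ω hb)
  obtain ⟨hD, tB, htB, hB⟩ := conj_generators_of_projNorm hn hζ hM hP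
  let S : Submonoid (Matrix (Fin 2) (Fin 2) ℂ) :=
    { carrier := {a | M * (a ⊗ₖ 1) * Mᴴ ∈ tensorSet (dihedral ω)}
      mul_mem' := fun {a b} ha hb => by
        show M * ((a * b) ⊗ₖ 1) * Mᴴ ∈ tensorSet (dihedral ω)
        rw [conj_mul_kronecker_one hM]
        exact (tensorSubmonoid (dihedral ω)).mul_mem ha hb
      one_mem' := by
        show M * (1 ⊗ₖ 1) * Mᴴ ∈ tensorSet (dihedral ω)
        rw [one_kronecker_one, mul_one, ← star_eq_conjTranspose, Unitary.mul_star_self_of_mem hM]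
        exact one_mem (tensorSubmonoid (dihedral ω)) }
  have hneg : -1 ∈ S := by
    show M * ((-1) ⊗ₖ 1) * Mᴴ ∈ tensorSet (dihedral ω)
    rw [← neg_one_smul ℂ (1 : Matrix (Fin 2) (Fin 2) ℂ), smul_kronecker, one_kronecker_one,
      ← unitaryConj_apply hM, map_smul, map_one, neg_one_smul]
    exact neg_mem_tensorSet (neg_one_mem_dihedral hω) (one_mem (tensorSubmonoid (dihedral ω)))
  have hrot : rotMat (ω ^ 2) ∈ S := hsub hD
  have hrefl : reflMat 1 ∈ S := by
    show M * (reflMat 1 ⊗ₖ 1) * Mᴴ ∈ tensorSet (dihedral ω)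
    rcases hB with hB | hB <;> rw [hB]
    exacts [hsub htB, neg_mem_tensorSet (neg_one_mem_dihedral hω) (hsub htB)]
  suffices dihedral ω ≤ S from this ha
  refine Submonoid.closure_le.2 ?_
  rintro _ (rfl | rfl)
  · obtain ⟨m, rfl⟩ := hn
    have : rotMat ω = -1 * rotMat (ω ^ 2) ^ (m + 1) := by
      rw [neg_one_mul, rotMat_pow, neg_rotMat, ← pow_mul,
        show 2 * (m + 1) = 2 * m + 1 + 1 by ring, pow_succ, hω, neg_one_mul, neg_neg]
    rw [this]
    exact mul_mem hneg (pow_mem hrot _)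
  · exact hrefl

lemma projNorm_mul_swapMat {S : Set (Matrix (Fin 2) (Fin 2) ℂ)}
    (hP : ProjNorm M (tensorSet S)) : ProjNorm (M * swapMat) (tensorSet S) := by
  rintro _ ⟨a, ha, b, hb, rfl⟩
  rw [conj_mul_swapMat, swapMat_mul_kronecker_mul_swapMat]
  exact hP _ (kron_mem_tensorSet hb ha)

theorem conj_mem_of_projNorm (hn : Odd n) {ω : ℂ} (hω : ω ^ n = -1)
    (hM : M ∈ unitaryGroup _ ℂ) (hP : ProjNorm M (tensorSet (dihedral (ω ^ 2)))) :
    ∀ x ∈ tensorSet (dihedral ω), M * x * Mᴴ ∈ tensorSet (dihedral ω) := by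
  rintro _ ⟨a, ha, b, hb, rfl⟩
  have hright : M * (1 ⊗ₖ b) * Mᴴ ∈ tensorSet (dihedral ω) := by
    have := conj_kron_one_mem_of_projNorm hn hω (mul_mem hM swapMat_mem_unitaryGroup)
      (projNorm_mul_swapMat hP) hb
    rwa [conj_mul_swapMat, swapMat_mul_kronecker_mul_swapMat] at this
  rw [show a ⊗ₖ b = (a ⊗ₖ 1) * (1 ⊗ₖ b) by rw [← mul_kronecker_mul, mul_one, one_mul],
    ← unitaryConj_apply hM, map_mul]
  exact (tensorSubmonoid (dihedral ω)).mul_mem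
    (conj_kron_one_mem_of_projNorm hn hω hM hP ha) hright

end ProjectiveNormaliser

lemma _root_.IsPrimitiveRoot.ne_inv {ω : ℂ} {k : ℕ} (h : IsPrimitiveRoot ω k) (hk : 2 < k) :
    ω ≠ ω⁻¹ := by
  intro he
  have : ω ^ 2 = 1 := by
    rw [sq]; nth_rewrite 2 [he]; exact mul_inv_cancel₀ (h.ne_zero (by omega))
  have := Nat.le_of_dvd two_pos (h.dvd_of_pow_eq_one 2 this)
  omega

lemma _root_.IsPrimitiveRoot.add_inv_ne_zero {ω : ℂ} {k : ℕ} (h : IsPrimitiveRoot ω k)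
    (hk : 4 < k) : ω + ω⁻¹ ≠ 0 := by
  intro he
  have hω0 : ω ≠ 0 := h.ne_zero (by omega)
  have h2 : ω ^ 2 = -1 := by
    field_simp at he; linear_combination he
  have : ω ^ 4 = 1 := by
    rw [show 4 = 2 * 2 by rfl, pow_mul, h2]; norm_num
  have := Nat.le_of_dvd (by norm_num) (h.dvd_of_pow_eq_one 4 this)
  omega

end TensorDihedral

end

open TensorDihedral

/-- Let n ≥ 3 be odd, ω_{2n} = e^{2πi/(2n)}, and G' ⊆ U(2) the matrix
group generated by C = diag(ω_{2n}, ω_{2n}⁻¹) and B = [[0,1],[1,0]].  Then G' is not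
entangling: every N ∈ U(4) with N (G'⊗G') N† = G'⊗G' satisfies N = A⊗B' or
N = SWAP·(A⊗B') for some A, B' ∈ U(2).  Consequently, for odd n the matrix group
generated by diag(ω_n, ω_n⁻¹) and B has no entangling projective normaliser of its
tensor square. -/
theorem stmt_15 (n : ℕ) (hn : 3 ≤ n) (hodd : Odd n)
    (ω : ℂ) (hω : ω = Complex.exp (2 * Real.pi * Complex.I / (2 * n)))
    (ωn : ℂ) (hωn : ωn = Complex.exp (2 * Real.pi * Complex.I / n))
    (C B : Matrix (Fin 2) (Fin 2) ℂ)
    (hC : C = !![ω, 0; 0, ω⁻¹]) (hB : B = !![0, 1; 1, 0])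
    (G' : Set (Matrix (Fin 2) (Fin 2) ℂ))
    (hG' : G' = (Submonoid.closure {C, B} : Submonoid (Matrix (Fin 2) (Fin 2) ℂ)))
    (G : Set (Matrix (Fin 2) (Fin 2) ℂ))
    (hG : G = (Submonoid.closure {!![ωn, 0; 0, ωn⁻¹], B} :
      Submonoid (Matrix (Fin 2) (Fin 2) ℂ))) :
    (∀ N : Matrix (Fin 2 × Fin 2) (Fin 2 × Fin 2) ℂ,
      N ∈ Matrix.unitaryGroup (Fin 2 × Fin 2) ℂ →
      (fun g => N * g * Nᴴ) '' tensorSet G' = tensorSet G' →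
      ∃ A B' : Matrix (Fin 2) (Fin 2) ℂ,
        A ∈ Matrix.unitaryGroup (Fin 2) ℂ ∧ B' ∈ Matrix.unitaryGroup (Fin 2) ℂ ∧
        (N = A ⊗ₖ B' ∨ N = swapMat * (A ⊗ₖ B'))) ∧
    ¬ ∃ M : Matrix (Fin 2 × Fin 2) (Fin 2 × Fin 2) ℂ,
        M ∈ Matrix.unitaryGroup (Fin 2 × Fin 2) ℂ ∧
        ProjNorm M (tensorSet G) ∧ Entangling M := by
  have hprim : IsPrimitiveRoot ω (2 * n) := by
    rw [hω]; exact_mod_cast Complex.isPrimitiveRoot_exp (2 * n) (by omega)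
  have hωn' : ω ^ n = -1 := by
    have := hprim.pow_of_dvd (p := n) (by omega) (dvd_mul_left n 2)
    rw [Nat.mul_div_cancel 2 (by omega)] at this
    exact this.eq_neg_one_of_two_right
  have hωn2 : ωn = ω ^ 2 := by
    rw [hωn, hω, ← Complex.exp_nat_mul]; congr 1; push_cast; field_simp
  have hG'ω : G' = dihedral ω := by rw [hG', hC, hB, ← reflMat_one]; rfl
  have hGω : G = dihedral (ω ^ 2) := by rw [hG, hB, hωn2, ← reflMat_one]; rfl
  subst hG'ω hGω
  have hω₁ := hprim.ne_inv (by omega)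
  have hω₂ := hprim.add_inv_ne_zero (by omega)
  refine ⟨fun N hN himg => exists_kron_or_swap_of_conj_mem hω₁ hω₂ hN
    fun x hx => himg ▸ ⟨x, hx, rfl⟩, ?_⟩
  rintro ⟨M, hM, hP, hEnt⟩
  obtain ⟨A, B', hA, hB', h | h⟩ :=
    exists_kron_or_swap_of_conj_mem hω₁ hω₂ hM (conj_mem_of_projNorm hodd hωn' hM hP)
  exacts [(hEnt A B' hA hB').1 h, (hEnt A B' hA hB').2 h]
end
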